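/- (Theorem: potential bound for Schroedinger Eigenmaps minimizers, part a) Let L be a symmetric positive semi-definite m×m matrix, D a positive-definite diagonal m×m matrix, V a symmetric positive semi-definite m×m matrix with dim Null(D^{−1/2} V D^{−1/2}) ≥ n, and α > 0. Define C_1 = min { trace(z_Nᵀ 𝓛 z_N) : z_N is an m×n matrix with columns in Null(𝓥) and z_Nᵀ z_N = I }, where 𝓛 = D^{−1/2} L D^{−1/2} and 𝓥 = D^{−1/2} V D^{−1/2}. If y^(α) minimizes trace(yᵀ (L + αV) y) over all m×n matrices y with yᵀ D y = I, then trace((y^(α))ᵀ V y^(α)) ≤ C_1 / α. -/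

import Mathlib

/-!
Take a minimizer `z` of the problem defining `C₁` and pull it back to `y' = D^{-1/2} z`.
Then `y'` satisfies the `D`-orthonormality constraint, `tr (y'ᵀ V y') = 0` because the columns
of `z` lie in `Null 𝓥`, and `tr (y'ᵀ L y') = C₁`. Comparing objectives with the minimizer `y`
gives `tr (yᵀ L y) + α tr (yᵀ V y) ≤ C₁`, and `tr (yᵀ L y) ≥ 0` since `L` is positive
semidefinite.
-/

open Matrix BigOperators

namespace Matrix

variable {m n : Type*} [Fintype m]

theorem PosSemidef.trace_transpose_mul_mul_nonneg [Fintype n] {L : Matrix m m ℝ}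
    (hL : L.PosSemidef) (y : Matrix m n ℝ) : 0 ≤ (yᵀ * L * y).trace := by
  simpa [conjTranspose_eq_transpose_of_trivial] using
    (hL.conjTranspose_mul_mul_same y).trace_nonneg

theorem trace_transpose_mul_add_smul_mul [Fintype n] (L V : Matrix m m ℝ) (α : ℝ)
    (y : Matrix m n ℝ) :
    (yᵀ * (L + α • V) * y).trace = (yᵀ * L * y).trace + α * (yᵀ * V * y).trace := by
  rw [Matrix.mul_add, Matrix.add_mul, trace_add, Matrix.mul_smul, Matrix.smul_mul, trace_smul,
    smul_eq_mul]

theorem trace_transpose_mul_mul_le_div_of_trace_le [Fintype n] {L V : Matrix m m ℝ}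
    (hL : L.PosSemidef) {α : ℝ} (hα : 0 < α) {y y' : Matrix m n ℝ}
    (hle : (yᵀ * (L + α • V) * y).trace ≤ (y'ᵀ * (L + α • V) * y').trace)
    (hV : (y'ᵀ * V * y').trace = 0) :
    (yᵀ * V * y).trace ≤ (y'ᵀ * L * y').trace / α := by
  rw [trace_transpose_mul_add_smul_mul, trace_transpose_mul_add_smul_mul, hV, mul_zero,
    add_zero] at hle
  rw [le_div_iff₀' hα]
  linarith [hL.trace_transpose_mul_mul_nonneg y]

theorem transpose_mul_mul_of_transpose_eq {R : Type*} [CommSemiring R] {S : Matrix m m R}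
    (hS : Sᵀ = S) (M : Matrix m m R) (z : Matrix m n R) :
    (S * z)ᵀ * M * (S * z) = zᵀ * (S * M * S) * z := by
  simp only [transpose_mul, hS, Matrix.mul_assoc]

theorem mul_eq_zero_of_forall_mulVec_eq_zero {l R : Type*} [Semiring R] {A : Matrix l m R}
    {z : Matrix m n R} (hz : ∀ j, A *ᵥ (fun i => z i j) = 0) : A * z = 0 := by
  ext i j
  simpa [mulVec, mul_apply, dotProduct] using congrFun (hz j) i

variable [DecidableEq m]

theorem diagonal_inv_sqrt_mul_diagonal_mul_diagonal_inv_sqrt {d : m → ℝ} (hd : ∀ i, 0 < d i) :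
    diagonal (fun i => (√(d i))⁻¹) * diagonal d * diagonal (fun i => (√(d i))⁻¹) = 1 := by
  rw [diagonal_mul_diagonal, diagonal_mul_diagonal, ← diagonal_one]
  congr 1
  funext i
  have hsqrt : √(d i) ≠ 0 := (Real.sqrt_pos.mpr (hd i)).ne'
  field_simp
  exact (Real.sq_sqrt (hd i).le).symm

end Matrix

theorem schroedinger_potential_bound_general (m n : ℕ)
    (L : Matrix (Fin m) (Fin m) ℝ) (hL : L.PosSemidef)
    (d : Fin m → ℝ) (hd : ∀ i, 0 < d i)
    (V : Matrix (Fin m) (Fin m) ℝ)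
    (α : ℝ) (hα : 0 < α)
    (𝓛 𝓥 : Matrix (Fin m) (Fin m) ℝ)
    (h𝓛 : 𝓛 = (Matrix.diagonal fun i => (Real.sqrt (d i))⁻¹) * L *
            (Matrix.diagonal fun i => (Real.sqrt (d i))⁻¹))
    (h𝓥 : 𝓥 = (Matrix.diagonal fun i => (Real.sqrt (d i))⁻¹) * V *
            (Matrix.diagonal fun i => (Real.sqrt (d i))⁻¹))
    (C₁ : ℝ)
    (hC₁ : IsLeast { c : ℝ | ∃ zN : Matrix (Fin m) (Fin n) ℝ,
        (∀ j, 𝓥.mulVec (fun i => zN i j) = 0) ∧ zNᵀ * zN = 1 ∧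
        c = (zNᵀ * 𝓛 * zN).trace } C₁)
    (y : Matrix (Fin m) (Fin n) ℝ)
    (hmin : ∀ y' : Matrix (Fin m) (Fin n) ℝ, y'ᵀ * Matrix.diagonal d * y' = 1 →
      (yᵀ * (L + α • V) * y).trace ≤ (y'ᵀ * (L + α • V) * y').trace) :
    (yᵀ * V * y).trace ≤ C₁ / α := by
  obtain ⟨z, hz_null, hz_ortho, rfl⟩ := hC₁.1
  set S : Matrix (Fin m) (Fin m) ℝ := Matrix.diagonal fun i => (Real.sqrt (d i))⁻¹
  have hS : Sᵀ = S := Matrix.diagonal_transpose _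
  have hadm : (S * z)ᵀ * Matrix.diagonal d * (S * z) = 1 := by
    rw [Matrix.transpose_mul_mul_of_transpose_eq hS,
      Matrix.diagonal_inv_sqrt_mul_diagonal_mul_diagonal_inv_sqrt hd, Matrix.mul_one, hz_ortho]
  have hV : ((S * z)ᵀ * V * (S * z)).trace = 0 := by
    rw [Matrix.transpose_mul_mul_of_transpose_eq hS, ← h𝓥, Matrix.mul_assoc,
      Matrix.mul_eq_zero_of_forall_mulVec_eq_zero hz_null, Matrix.mul_zero, Matrix.trace_zero]
  have hbound := Matrix.trace_transpose_mul_mul_le_div_of_trace_le hL hα (hmin _ hadm) hV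
  rwa [Matrix.transpose_mul_mul_of_transpose_eq hS, ← h𝓛] at hbound

theorem schroedinger_potential_bound (m n : ℕ)
    (L : Matrix (Fin m) (Fin m) ℝ) (hL : L.PosSemidef)
    (d : Fin m → ℝ) (hd : ∀ i, 0 < d i)
    (V : Matrix (Fin m) (Fin m) ℝ) (hV : V.PosSemidef)
    (α : ℝ) (hα : 0 < α)
    (𝓛 𝓥 : Matrix (Fin m) (Fin m) ℝ)
    (h𝓛 : 𝓛 = (Matrix.diagonal fun i => (Real.sqrt (d i))⁻¹) * L *
            (Matrix.diagonal fun i => (Real.sqrt (d i))⁻¹))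
    (h𝓥 : 𝓥 = (Matrix.diagonal fun i => (Real.sqrt (d i))⁻¹) * V *
            (Matrix.diagonal fun i => (Real.sqrt (d i))⁻¹))
    (hdim : n ≤ Module.finrank ℝ (LinearMap.ker 𝓥.mulVecLin))
    (C₁ : ℝ)
    (hC₁ : IsLeast { c : ℝ | ∃ zN : Matrix (Fin m) (Fin n) ℝ,
        (∀ j, 𝓥.mulVec (fun i => zN i j) = 0) ∧ zNᵀ * zN = 1 ∧
        c = (zNᵀ * 𝓛 * zN).trace } C₁)
    (y : Matrix (Fin m) (Fin n) ℝ)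
    (hconstr : yᵀ * Matrix.diagonal d * y = 1)
    (hmin : ∀ y' : Matrix (Fin m) (Fin n) ℝ, y'ᵀ * Matrix.diagonal d * y' = 1 →
      (yᵀ * (L + α • V) * y).trace ≤ (y'ᵀ * (L + α • V) * y').trace) :
    (yᵀ * V * y).trace ≤ C₁ / α :=
  schroedinger_potential_bound_general m n L hL d hd V α hα 𝓛 𝓥 h𝓛 h𝓥 C₁ hC₁ y hmin
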